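/- Let ℬ ⊆ ℝ^p be the convex hull of finitely many parameter vectors {χ^ν}. Consider an interconnected system with control-affine, parameter-affine dynamics: for z_{i,k} = (x_{i,k}, {x_{j,k}}_{j∈ℰ_i}, d_{i,k}), x_{i,k+1} = h_i(z_{i,k}; χ) + g_i(z_{i,k}; χ) u_{i,k} = Σ_{l=1}^p χ_l (Φ^h_{i,l}(z_{i,k}) + Φ^g_{i,l}(z_{i,k}) u_{i,k}), where all Φ^h_{i,l}, Φ^g_{i,l} are independent of χ, and the control u_{i,k} is determined by a χ-independent feedback law. Assume each V_i : ℝ^{n_i} → [0,∞) is convex. Suppose there exist ψ ≥ 0 and nonnegative gains γ_{i,j} satisfying the small-gain condition max_{i∈𝒩} Σ_{j∈ℰ_i∪{i}} γ_{i,j} ≤ 1−ε for some ε ∈ (0,1), such that for every vertex χ^ν and all admissible states, controls given by the feedback law, and disturbances, V_i(x_{i,k+1}(χ^ν)) ≤ Σ_{j∈ℰ_i∪{i}} γ_{i,j} V_j(x_{j,k}) + ψ|d_{i,k}|₂ for all i ∈ 𝒩. Then for every χ ∈ ℬ the same decremental inequality holds with the same {V_i}, and (given class-𝒦_∞ sandwich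 bounds on the V_i) the closed-loop interconnected system is scalably input-to-state stable for every χ ∈ ℬ. -/

import Mathlib

/-!
For a fixed state, feedback and disturbance the successor state is linear in the parameter `χ`,
so `V i` of it is a convex function of `χ` and attains its maximum over the hull at a vertex, where
the decremental inequality is assumed. For sISS, the small-gain condition makes
`W k = maxᵢ V i (x k i)` satisfy `W (k + 1) ≤ (1 - ε) W k + ψ C`, hence
`W k ≤ (1 - ε) ^ k W 0 + ψ C / ε`; the sandwich bounds and the inverse of `α₁` turn this into
the sISS estimate, after splitting `α₁⁻¹ (a + b) ≤ α₁⁻¹ (2 a) + α₁⁻¹ (2 b)`.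
-/

open scoped NNReal
open Filter

noncomputable section

/-- `ℝ^m` with the Euclidean norm. -/
abbrev Evec (m : ℕ) : Type := EuclideanSpace ℝ (Fin m)

/-- A class-𝒦 function: continuous, strictly increasing, vanishing at `0`. -/
def IsClassK (α : ℝ≥0 → ℝ≥0) : Prop :=
  Continuous α ∧ StrictMono α ∧ α 0 = 0

/-- A class-𝒦∞ function: class 𝒦 and unbounded. -/
def IsClassKInfty (α : ℝ≥0 → ℝ≥0) : Prop :=
  IsClassK α ∧ Tendsto α atTop atTop

/-- A class-𝒦ℒ function. -/
def IsClassKL (β : ℝ≥0 → ℕ → ℝ≥0) : Prop :=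
  (∀ k : ℕ, IsClassK fun s => β s k) ∧
    ∀ s : ℝ≥0, Tendsto (fun k => β s k) atTop (nhds 0)

theorem ConvexOn.exists_ge_linearCombination_of_mem_convexHull {κ M : Type*} [Fintype κ]
    [AddCommGroup M] [Module ℝ M] {V : M → ℝ} (hV : ConvexOn ℝ Set.univ V) (w : κ → M)
    {t : Set (κ → ℝ)} {c : κ → ℝ} (hc : c ∈ convexHull ℝ t) :
    ∃ c' ∈ t, V (∑ l, c l • w l) ≤ V (∑ l, c' l • w l) :=
  (hV.comp_linearMap (Fintype.linearCombination ℝ w)).exists_ge_of_mem_convexHull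
    (Set.subset_univ _) hc

theorem isClassK_id : IsClassK fun s => s :=
  ⟨continuous_id, strictMono_id, rfl⟩

namespace IsClassK

variable {α g : ℝ≥0 → ℝ≥0}

theorem comp (hg : IsClassK g) (hα : IsClassK α) : IsClassK fun s => g (α s) :=
  ⟨hg.1.comp hα.1, hg.2.1.comp hα.2.1, by simp [hα.2.2, hg.2.2]⟩

theorem const_mul (hα : IsClassK α) {c : ℝ≥0} (hc : 0 < c) : IsClassK fun s => c * α s :=
  ⟨continuous_const.mul hα.1, fun _ _ h => mul_lt_mul_of_pos_left (hα.2.1 h) hc,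
    by simp [hα.2.2]⟩

theorem isClassKL_geometric (hg : IsClassK g) (hα : IsClassK α) {r : ℝ≥0} (hr0 : 0 < r)
    (hr1 : r < 1) : IsClassKL fun s k => g (r ^ k * α s) := by
  refine ⟨fun k => hg.comp (hα.const_mul (pow_pos hr0 k)), fun s => ?_⟩
  have hdecay : Tendsto (fun k : ℕ => r ^ k * α s) atTop (nhds 0) := by
    simpa using (NNReal.tendsto_pow_atTop_nhds_zero_of_lt_one hr1).mul_const (α s)
  simpa [Function.comp_def, hg.2.2] using (hg.1.tendsto 0).comp hdecay

end IsClassK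

theorem IsClassKInfty.surjective {α : ℝ≥0 → ℝ≥0} (hα : IsClassKInfty α) :
    Function.Surjective α := by
  intro y
  obtain ⟨s, hs⟩ := (hα.2.eventually_ge_atTop y).exists
  obtain ⟨x, -, hx⟩ := intermediate_value_Icc (zero_le : 0 ≤ s) hα.1.1.continuousOn
    (⟨by simp [hα.1.2.2], hs⟩ : y ∈ Set.Icc (α 0) (α s))
  exact ⟨x, hx⟩

theorem IsClassKInfty.exists_leftInverse {α : ℝ≥0 → ℝ≥0} (hα : IsClassKInfty α) :
    ∃ g, IsClassK g ∧ ∀ s, g (α s) = s := by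
  let σ := StrictMono.orderIsoOfSurjective α hα.1.2.1 hα.surjective
  have hσα : ∀ s, σ.symm (α s) = s :=
    StrictMono.orderIsoOfSurjective_symm_apply_self α hα.1.2.1 hα.surjective
  refine ⟨σ.symm, ⟨σ.symm.continuous, σ.symm.strictMono, ?_⟩, hσα⟩
  simpa [hα.1.2.2] using hσα 0

theorem Monotone.apply_add_le_apply_two_mul_add {g : ℝ≥0 → ℝ≥0} (hg : Monotone g)
    (a b : ℝ≥0) : g (a + b) ≤ g (2 * a) + g (2 * b) := by
  rcases le_total a b with h | h
  · exact (hg (by rw [two_mul]; gcongr)).trans le_add_self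
  · exact (hg (by rw [two_mul]; gcongr)).trans le_self_add

theorem NNReal.le_geometric_add_of_le_mul_add {W : ℕ → ℝ≥0} {ε b : ℝ≥0} (hε0 : 0 < ε)
    (hε1 : ε ≤ 1) (hW : ∀ k, W (k + 1) ≤ (1 - ε) * W k + b) (k : ℕ) :
    W k ≤ (1 - ε) ^ k * W 0 + b / ε := by
  -- `b / ε` is the fixed point of `w ↦ (1 - ε) * w + b`
  have hfix : (1 - ε) * (b / ε) + b = b / ε := by
    rw [← NNReal.coe_inj]
    push_cast [NNReal.coe_sub hε1]
    field_simp
    ring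
  induction k with
  | zero => simp
  | succ k ih =>
    calc W (k + 1) ≤ (1 - ε) * W k + b := hW k
      _ ≤ (1 - ε) * ((1 - ε) ^ k * W 0 + b / ε) + b := by gcongr
      _ = (1 - ε) ^ (k + 1) * W 0 + ((1 - ε) * (b / ε) + b) := by ring
      _ = (1 - ε) ^ (k + 1) * W 0 + b / ε := by rw [hfix]

section VectorLyapunov

variable {ι : Type*} [Fintype ι] [DecidableEq ι] {X D : ι → Type*}
  [∀ i, SeminormedAddCommGroup (D i)]
  {nbr : ι → Finset ι} {γ : ι → ι → ℝ≥0} {ε ψ : ℝ≥0} {V : ∀ i, X i → ℝ≥0}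

theorem sup_lyapunov_succ_le {x : ℕ → ∀ i, X i} {d : ℕ → ∀ i, D i} {C : ℝ≥0}
    (hsg : ∀ i, ∑ j ∈ insert i (nbr i), γ i j ≤ 1 - ε)
    (hdec : ∀ k i, V i (x (k + 1) i) ≤
      ∑ j ∈ insert i (nbr i), γ i j * V j (x k j) + ψ * ‖d k i‖₊)
    (hC : ∀ k i, ‖d k i‖₊ ≤ C) (k : ℕ) :
    (Finset.univ.sup fun i => V i (x (k + 1) i)) ≤
      (1 - ε) * (Finset.univ.sup fun i => V i (x k i)) + ψ * C := by
  set W := Finset.univ.sup fun i => V i (x k i)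
  refine Finset.sup_le fun i _ => ?_
  calc V i (x (k + 1) i)
      ≤ ∑ j ∈ insert i (nbr i), γ i j * V j (x k j) + ψ * ‖d k i‖₊ := hdec k i
    _ ≤ ∑ j ∈ insert i (nbr i), γ i j * W + ψ * C := by
        gcongr with j
        · exact Finset.le_sup (f := fun i => V i (x k i)) (Finset.mem_univ j)
        · exact hC k i
    _ = (∑ j ∈ insert i (nbr i), γ i j) * W + ψ * C := by rw [Finset.sum_mul]
    _ ≤ (1 - ε) * W + ψ * C := by gcongr; exact hsg i

theorem exists_sISS_bound_of_vector_lyapunov [∀ i, SeminormedAddCommGroup (X i)]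
    {α₁ α₂ : ℝ≥0 → ℝ≥0} (hα₁ : IsClassKInfty α₁) (hα₂ : IsClassK α₂) (hε0 : 0 < ε) (hε1 : ε < 1)
    (hsg : ∀ i, ∑ j ∈ insert i (nbr i), γ i j ≤ 1 - ε)
    (hsandwich : ∀ i x, α₁ ‖x‖₊ ≤ V i x ∧ V i x ≤ α₂ ‖x‖₊) :
    ∃ β : ℝ≥0 → ℕ → ℝ≥0, ∃ μ : ℝ≥0 → ℝ≥0, IsClassKL β ∧ IsClassK μ ∧
      ∀ (x : ℕ → ∀ i, X i) (d : ℕ → ∀ i, D i),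
        (∀ k i, V i (x (k + 1) i) ≤
          ∑ j ∈ insert i (nbr i), γ i j * V j (x k j) + ψ * ‖d k i‖₊) →
        ∀ C : ℝ≥0, (∀ k i, ‖d k i‖₊ ≤ C) →
        ∀ k i, ‖x k i‖₊ ≤ β (Finset.univ.sup fun j => ‖x 0 j‖₊) k + μ C := by
  obtain ⟨g, hg, hgα⟩ := hα₁.exists_leftInverse
  have hc : (0 : ℝ≥0) < 2 * (ψ / ε + 1) := by positivity
  refine ⟨fun s k => g ((1 - ε) ^ k * (2 * α₂ s)), fun C => g (2 * (ψ / ε + 1) * C),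
    hg.isClassKL_geometric (hα₂.const_mul two_pos) (tsub_pos_of_lt hε1)
      (tsub_lt_self one_pos hε0),
    hg.comp (isClassK_id.const_mul hc), ?_⟩
  intro x d hdec C hC k i
  set M := Finset.univ.sup fun j => ‖x 0 j‖₊
  have hV0 : (Finset.univ.sup fun j => V j (x 0 j)) ≤ α₂ M :=
    Finset.sup_le fun j _ => (hsandwich j _).2.trans
      (hα₂.2.1.monotone (Finset.le_sup (f := fun j => ‖x 0 j‖₊) (Finset.mem_univ j)))
  have hα₁x : α₁ ‖x k i‖₊ ≤ (1 - ε) ^ k * α₂ M + ψ * C / ε :=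
    calc α₁ ‖x k i‖₊ ≤ V i (x k i) := (hsandwich i _).1
      _ ≤ Finset.univ.sup fun j => V j (x k j) :=
          Finset.le_sup (f := fun j => V j (x k j)) (Finset.mem_univ i)
      _ ≤ (1 - ε) ^ k * (Finset.univ.sup fun j => V j (x 0 j)) + ψ * C / ε :=
          NNReal.le_geometric_add_of_le_mul_add
            (W := fun k => Finset.univ.sup fun j => V j (x k j)) hε0 hε1.le
            (sup_lyapunov_succ_le hsg hdec hC) k
      _ ≤ (1 - ε) ^ k * α₂ M + ψ * C / ε := by gcongr
  calc ‖x k i‖₊ = g (α₁ ‖x k i‖₊) := (hgα _).symm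
    _ ≤ g ((1 - ε) ^ k * α₂ M + ψ * C / ε) := hg.2.1.monotone hα₁x
    _ ≤ g (2 * ((1 - ε) ^ k * α₂ M)) + g (2 * (ψ * C / ε)) :=
        hg.2.1.monotone.apply_add_le_apply_two_mul_add _ _
    _ ≤ g ((1 - ε) ^ k * (2 * α₂ M)) + g (2 * (ψ / ε + 1) * C) := by
        rw [mul_left_comm]
        refine add_le_add le_rfl (hg.2.1.monotone ?_)
        rw [mul_assoc, mul_div_right_comm]
        gcongr
        exact le_self_add

end VectorLyapunov

theorem sISS_control_affine_parameter_affine_closed_loop_general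
    {ι : Type} [Fintype ι] [DecidableEq ι]
    {Ω : Type}
    (n q p : ι → ℕ) (nbr : ι → Finset ι)
    (P : ℕ) (χv : Ω → (Fin P → ℝ))
    (Φh : ∀ i : ι, Fin P → (∀ j : ι, Evec (n j)) → Evec (p i) → Evec (n i))
    (Φg : ∀ i : ι, Fin P → (∀ j : ι, Evec (n j)) → Evec (p i) →
      (Evec (q i) →L[ℝ] Evec (n i)))
    (f : (Fin P → ℝ) → ∀ i : ι,
      (∀ j : ι, Evec (n j)) → Evec (q i) → Evec (p i) → Evec (n i))
    (haff : ∀ (χ : Fin P → ℝ) (i : ι) (x : ∀ j : ι, Evec (n j)) (u : Evec (q i))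
        (d : Evec (p i)),
      f χ i x u d = ∑ l : Fin P, χ l • (Φh i l x d + Φg i l x d u))
    (π : ∀ i : ι, (∀ j : ι, Evec (n j)) → Evec (q i))
    (ε : ℝ≥0) (hε0 : 0 < ε) (hε1 : ε < 1) (ψ : ℝ≥0)
    (α₁ α₂ : ℝ≥0 → ℝ≥0) (hα₁ : IsClassKInfty α₁) (hα₂ : IsClassKInfty α₂)
    (γ : ι → ι → ℝ≥0)
    (hsg : ∀ i : ι, ∑ j ∈ insert i (nbr i), γ i j ≤ 1 - ε)
    (V : ∀ i : ι, Evec (n i) → ℝ≥0)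
    (hconv : ∀ i : ι, ConvexOn ℝ Set.univ fun x : Evec (n i) => (V i x : ℝ))
    (hsandwich : ∀ (i : ι) (x : Evec (n i)), α₁ ‖x‖₊ ≤ V i x ∧ V i x ≤ α₂ ‖x‖₊)
    (hvertex : ∀ (ν : Ω) (i : ι) (x : ∀ j : ι, Evec (n j)) (d : Evec (p i)),
      V i (f (χv ν) i x (π i x) d) ≤
        ∑ j ∈ insert i (nbr i), γ i j * V j (x j) + ψ * ‖d‖₊) :
    ∀ χ ∈ convexHull ℝ (Set.range χv),
      -- the closed-loop decremental condition holds throughout the hull …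
      (∀ (i : ι) (x : ∀ j : ι, Evec (n j)) (d : Evec (p i)),
        V i (f χ i x (π i x) d) ≤
          ∑ j ∈ insert i (nbr i), γ i j * V j (x j) + ψ * ‖d‖₊) ∧
      -- … and the closed-loop system with parameter `χ` is sISS
      (∃ β : ℝ≥0 → ℕ → ℝ≥0, ∃ μ : ℝ≥0 → ℝ≥0, IsClassKL β ∧ IsClassK μ ∧
        ∀ (x : ℕ → ∀ j : ι, Evec (n j)) (d : ℕ → ∀ i : ι, Evec (p i)),
          (∀ (k : ℕ) (i : ι), x (k + 1) i = f χ i (x k) (π i (x k)) (d k i)) →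
          ∀ C : ℝ≥0, (∀ (k : ℕ) (i : ι), ‖d k i‖₊ ≤ C) →
          ∀ (k : ℕ) (i : ι),
            ‖x k i‖₊ ≤ β (Finset.univ.sup fun j => ‖x 0 j‖₊) k + μ C) := by
  intro χ hχ
  have hdec : ∀ (i : ι) (x : ∀ j : ι, Evec (n j)) (d : Evec (p i)),
      V i (f χ i x (π i x) d) ≤
        ∑ j ∈ insert i (nbr i), γ i j * V j (x j) + ψ * ‖d‖₊ := by
    intro i x d
    obtain ⟨_, ⟨ν, rfl⟩, hle⟩ := (hconv i).exists_ge_linearCombination_of_mem_convexHull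
      (fun l => Φh i l x d + Φg i l x d (π i x)) hχ
    rw [← haff, ← haff] at hle
    exact_mod_cast hle.trans (NNReal.coe_le_coe.2 (hvertex ν i x d))
  obtain ⟨β, μ, hβ, hμ, hbound⟩ :=
    exists_sISS_bound_of_vector_lyapunov (X := fun j => Evec (n j)) (D := fun i => Evec (p i))
      hα₁ hα₂.1 hε0 hε1 hsg hsandwich
  exact ⟨hdec, β, μ, hβ, hμ,
    fun x d hx => hbound x d fun k i => hx k i ▸ hdec i (x k) (d k i)⟩

/-- **sISS with control-affine, parameter-affine dynamics (closed loop).** Let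
`ℬ ⊆ ℝ^P` be the convex hull of finitely many parameter vectors `χv ν`, and let the
dynamics be control-affine and affine in the parameter:
`f χ i x u d = Σ_l χ l • (Φh i l x d + Φg i l x d u)` with `Φh, Φg` independent of
`χ`, closed by a `χ`-independent feedback law `π`. Assume each `V i` is convex, there
are `ψ ≥ 0` and nonnegative gains with small-gain row sums at most `1 - ε` such that
the closed-loop decremental condition holds at every vertex `χv ν` for all admissible
states and disturbances, and the `V i` satisfy class-𝒦∞ sandwich bounds. Then for
every `χ ∈ ℬ` the same decremental inequality holds with the same `V`, and the
closed-loop interconnected system is scalably input-to-state stable for every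
`χ ∈ ℬ`. -/
theorem sISS_control_affine_parameter_affine_closed_loop
    {ι : Type} [Fintype ι] [Nonempty ι] [DecidableEq ι]
    {Ω : Type} [Fintype Ω] [Nonempty Ω]
    (n q p : ι → ℕ) (nbr : ι → Finset ι)
    (P : ℕ) (χv : Ω → (Fin P → ℝ))
    (Φh : ∀ i : ι, Fin P → (∀ j : ι, Evec (n j)) → Evec (p i) → Evec (n i))
    (Φg : ∀ i : ι, Fin P → (∀ j : ι, Evec (n j)) → Evec (p i) →
      (Evec (q i) →L[ℝ] Evec (n i)))
    (f : (Fin P → ℝ) → ∀ i : ι,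
      (∀ j : ι, Evec (n j)) → Evec (q i) → Evec (p i) → Evec (n i))
    (haff : ∀ (χ : Fin P → ℝ) (i : ι) (x : ∀ j : ι, Evec (n j)) (u : Evec (q i))
        (d : Evec (p i)),
      f χ i x u d = ∑ l : Fin P, χ l • (Φh i l x d + Φg i l x d u))
    (π : ∀ i : ι, (∀ j : ι, Evec (n j)) → Evec (q i))
    (ε : ℝ≥0) (hε0 : 0 < ε) (hε1 : ε < 1) (ψ : ℝ≥0)
    (α₁ α₂ : ℝ≥0 → ℝ≥0) (hα₁ : IsClassKInfty α₁) (hα₂ : IsClassKInfty α₂)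
    (γ : ι → ι → ℝ≥0)
    (hsg : ∀ i : ι, ∑ j ∈ insert i (nbr i), γ i j ≤ 1 - ε)
    (V : ∀ i : ι, Evec (n i) → ℝ≥0)
    (hconv : ∀ i : ι, ConvexOn ℝ Set.univ fun x : Evec (n i) => (V i x : ℝ))
    (hsandwich : ∀ (i : ι) (x : Evec (n i)), α₁ ‖x‖₊ ≤ V i x ∧ V i x ≤ α₂ ‖x‖₊)
    (hvertex : ∀ (ν : Ω) (i : ι) (x : ∀ j : ι, Evec (n j)) (d : Evec (p i)),
      V i (f (χv ν) i x (π i x) d) ≤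
        ∑ j ∈ insert i (nbr i), γ i j * V j (x j) + ψ * ‖d‖₊) :
    ∀ χ ∈ convexHull ℝ (Set.range χv),
      -- the closed-loop decremental condition holds throughout the hull …
      (∀ (i : ι) (x : ∀ j : ι, Evec (n j)) (d : Evec (p i)),
        V i (f χ i x (π i x) d) ≤
          ∑ j ∈ insert i (nbr i), γ i j * V j (x j) + ψ * ‖d‖₊) ∧
      -- … and the closed-loop system with parameter `χ` is sISS
      (∃ β : ℝ≥0 → ℕ → ℝ≥0, ∃ μ : ℝ≥0 → ℝ≥0, IsClassKL β ∧ IsClassK μ ∧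
        ∀ (x : ℕ → ∀ j : ι, Evec (n j)) (d : ℕ → ∀ i : ι, Evec (p i)),
          (∀ (k : ℕ) (i : ι), x (k + 1) i = f χ i (x k) (π i (x k)) (d k i)) →
          ∀ C : ℝ≥0, (∀ (k : ℕ) (i : ι), ‖d k i‖₊ ≤ C) →
          ∀ (k : ℕ) (i : ι),
            ‖x k i‖₊ ≤ β (Finset.univ.sup fun j => ‖x 0 j‖₊) k + μ C) :=
  sISS_control_affine_parameter_affine_closed_loop_general n q p nbr P χv Φh Φg f haff π ε hε0 hε1 ψ
    α₁ α₂ hα₁ hα₂ γ hsg V hconv hsandwich hvertex
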